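/- arXiv:2308.03270 — 3 statements merged into one kernel-verified Lean document; each statement's English description precedes it below -/
import Mathlib

section
/- Let D(A) denote the minimal order of a finite open cover of a compact metric space X refining the finite open cover A. Then D(A ∨ B) ≤ D(A) + D(B) for any two finite open covers A and B of X. -/
open scoped Classical

/-- The order of a finite cover: the supremum over points of the number of elements of the
cover containing the point, minus one. -/
noncomputable def ordC {Y : Type*} (α : Finset (Set Y)) : ℕ :=
  sSup {m : ℕ | ∃ y : Y, m + 1 ≤ (α.filter (fun A => y ∈ A)).card}

/-- A finite family of sets is an open cover if all its members are open and they cover. -/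
def IsOpenCover {Y : Type*} [TopologicalSpace Y] (α : Finset (Set Y)) : Prop :=
  (∀ A ∈ α, IsOpen A) ∧ ⋃₀ (α : Set (Set Y)) = Set.univ

/-- `β` refines `α` if every element of `β` is contained in some element of `α`. -/
def RefinesC {Y : Type*} (β α : Finset (Set Y)) : Prop :=
  ∀ B ∈ β, ∃ A ∈ α, B ⊆ A

/-- `D(α)`: minimal order of a finite open cover refining `α`. -/
noncomputable def Dcov {Y : Type*} [TopologicalSpace Y] (α : Finset (Set Y)) : ℕ :=
  sInf {m : ℕ | ∃ β : Finset (Set Y), IsOpenCover β ∧ RefinesC β α ∧ ordC β = m}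

/-- The join `α ∨ β` of two finite covers. -/
noncomputable def joinC {Y : Type*} (α β : Finset (Set Y)) : Finset (Set Y) :=
  (α ×ˢ β).image fun p => p.1 ∩ p.2

/-!
Take refinements `γ`, `δ` of `α`, `β` of minimal order. Enumerate `γ = {C₀, …, C_{p-1}}` and
choose continuous `fᵢ ≥ 0` with `{fᵢ > 0} = Cᵢ` (metric spaces are perfectly normal). At each
point `x` the normalized partial sums of the `fᵢ x` cut `[0, 1]` into consecutive intervals,
the `i`-th one nonempty exactly when `x ∈ Cᵢ`; do the same for `δ = {D₀, …, D_{q-1}}`. The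
points where the `i`-th interval of `γ` meets the `j`-th interval of `δ` form an open subset
`Wᵢⱼ` of `Cᵢ ∩ Dⱼ`, and these sets cover. Two subdivisions of `[0, 1]` into `a` and `b`
nonempty intervals have at most `a + b - 1` overlapping pairs, so `ord W ≤ ord γ + ord δ`.
-/

open Finset

section Combinatorics

variable {α : Type*} [LinearOrder α] {s t : ℕ → α} {p q : ℕ}

def IntervalsOverlap (s t : ℕ → α) (i j : ℕ) : Prop :=
  max (s i) (t j) < min (s (i + 1)) (t (j + 1))

theorem Monotone.exists_eq_apply_zero_lt_succ (hs : Monotone s) (h : s 0 < s p) :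
    ∃ i < p, s i = s 0 ∧ s i < s (i + 1) := by
  induction p with
  | zero => exact absurd h (lt_irrefl _)
  | succ p ih =>
    by_cases hp : s 0 < s p
    · obtain ⟨i, hi, hi'⟩ := ih hp
      exact ⟨i, by omega, hi'⟩
    · have hp0 : s p = s 0 := le_antisymm (not_lt.mp hp) (hs (Nat.zero_le p))
      exact ⟨p, p.lt_succ_self, hp0, hp0 ▸ h⟩

theorem Monotone.eq_of_mem_Ico_succ (hs : Monotone s) {a : α} {i i' : ℕ}
    (hi : a ∈ Set.Ico (s i) (s (i + 1))) (hi' : a ∈ Set.Ico (s i') (s (i' + 1))) : i = i' := by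
  by_contra hne
  rcases Nat.lt_or_gt_of_ne hne with h | h
  · exact (hs h).not_gt (hi'.1.trans_lt hi.2)
  · exact (hs h).not_gt (hi.1.trans_lt hi'.2)

theorem IntervalsOverlap.max_mem_Ico_left {i j : ℕ} (h : IntervalsOverlap s t i j) :
    max (s i) (t j) ∈ Set.Ico (s i) (s (i + 1)) :=
  ⟨le_max_left _ _, h.trans_le (min_le_left _ _)⟩

theorem IntervalsOverlap.max_mem_Ico_right {i j : ℕ} (h : IntervalsOverlap s t i j) :
    max (s i) (t j) ∈ Set.Ico (t j) (t (j + 1)) :=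
  ⟨le_max_right _ _, h.trans_le (min_le_right _ _)⟩

theorem IntervalsOverlap.lt_succ_left {i j : ℕ} (h : IntervalsOverlap s t i j) :
    s i < s (i + 1) :=
  h.max_mem_Ico_left.1.trans_lt h.max_mem_Ico_left.2

theorem IntervalsOverlap.lt_succ_right {i j : ℕ} (h : IntervalsOverlap s t i j) :
    t j < t (j + 1) :=
  h.max_mem_Ico_right.1.trans_lt h.max_mem_Ico_right.2

theorem exists_intervalsOverlap (hs : Monotone s) (ht : Monotone t) (h0 : s 0 = t 0)
    (hsp : s 0 < s p) (htq : t 0 < t q) : ∃ i < p, ∃ j < q, IntervalsOverlap s t i j := by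
  obtain ⟨i, hi, hsi, hsi'⟩ := hs.exists_eq_apply_zero_lt_succ hsp
  obtain ⟨j, hj, htj, htj'⟩ := ht.exists_eq_apply_zero_lt_succ htq
  refine ⟨i, hi, j, hj, ?_⟩
  rw [IntervalsOverlap, hsi, htj, ← h0, max_self, lt_min_iff]
  exact ⟨hsi ▸ hsi', h0 ▸ htj ▸ htj'⟩

/-- Overlapping pairs are told apart by the larger left endpoint, which is a left endpoint of
a nonempty interval of `s` or of `t`; the common left endpoint `s 0 = t 0` is counted twice. -/
theorem card_intervalsOverlap_add_one_le (hs : Monotone s) (ht : Monotone t) (h0 : s 0 = t 0)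
    (hsp : s 0 < s p) (htq : t 0 < t q) :
    #{ij ∈ range p ×ˢ range q | IntervalsOverlap s t ij.1 ij.2} + 1 ≤
      #{i ∈ range p | s i < s (i + 1)} + #{j ∈ range q | t j < t (j + 1)} := by
  set S := {i ∈ range p | s i < s (i + 1)}
  set T := {j ∈ range q | t j < t (j + 1)}
  have hpairs : #{ij ∈ range p ×ˢ range q | IntervalsOverlap s t ij.1 ij.2} ≤
      #(S.image s ∪ T.image t) := by
    refine card_le_card_of_injOn (fun ij => max (s ij.1) (t ij.2)) ?_ ?_
    · rintro ⟨i, j⟩ hij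
      simp only [coe_filter, mem_product, mem_range] at hij
      obtain ⟨⟨hi, hj⟩, hov⟩ := hij
      rcases max_choice (s i) (t j) with hm | hm
      · refine mem_union_left _ (mem_image.mpr ⟨i, mem_filter.mpr ⟨mem_range.mpr hi, ?_⟩, hm.symm⟩)
        exact hm ▸ hov.lt_succ_left
      · refine mem_union_right _ (mem_image.mpr ⟨j, mem_filter.mpr ⟨mem_range.mpr hj, ?_⟩, hm.symm⟩)
        exact hm ▸ hov.lt_succ_right
    · rintro ⟨i, j⟩ hij ⟨i', j'⟩ hij' heq
      simp only [coe_filter, mem_product, mem_range, Set.mem_ofPred_eq] at hij hij' heq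
      have hi := hs.eq_of_mem_Ico_succ hij.2.max_mem_Ico_left (heq ▸ hij'.2.max_mem_Ico_left)
      have hj := ht.eq_of_mem_Ico_succ hij.2.max_mem_Ico_right (heq ▸ hij'.2.max_mem_Ico_right)
      rw [hi, hj]
  have hcommon : 1 ≤ #(S.image s ∩ T.image t) := by
    obtain ⟨i, hi, hsi, hsi'⟩ := hs.exists_eq_apply_zero_lt_succ hsp
    obtain ⟨j, hj, htj, htj'⟩ := ht.exists_eq_apply_zero_lt_succ htq
    refine card_pos.mpr ⟨s 0, mem_inter.mpr ⟨?_, ?_⟩⟩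
    · exact mem_image.mpr ⟨i, mem_filter.mpr ⟨mem_range.mpr hi, hsi'⟩, hsi⟩
    · exact mem_image.mpr ⟨j, mem_filter.mpr ⟨mem_range.mpr hj, htj'⟩, htj.trans h0.symm⟩
  have := card_union_add_card_inter (S.image s) (T.image t)
  have := card_image_le (s := S) (f := s)
  have := card_image_le (s := T) (f := t)
  omega

end Combinatorics

theorem Finset.card_filter_range_getD_toList {β : Type*} (γ : Finset β) (d : β) (P : β → Prop)
    [DecidablePred P] : #{i ∈ range γ.toList.length | P (γ.toList.getD i d)} = #{b ∈ γ | P b} := by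
  refine card_nbij (γ.toList.getD · d) (fun i hi => ?_) (fun i hi j hj hij => ?_) (fun b hb => ?_)
  · simp only [coe_filter, mem_range, Set.mem_ofPred_eq] at hi ⊢
    rw [List.getD_eq_getElem _ _ hi.1] at hi ⊢
    exact ⟨mem_toList.mp (List.getElem_mem hi.1), hi.2⟩
  · simp only [coe_filter, mem_range, Set.mem_ofPred_eq] at hi hj
    simp only [List.getD_eq_getElem _ _ hi.1, List.getD_eq_getElem _ _ hj.1] at hij
    exact (nodup_toList γ).getElem_inj_iff.mp hij
  · simp only [coe_filter, Set.mem_ofPred_eq] at hb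
    obtain ⟨i, hi, rfl⟩ := List.mem_iff_getElem.mp (mem_toList.mpr hb.1)
    refine ⟨i, ?_, List.getD_eq_getElem _ _ hi⟩
    simp only [coe_filter, mem_range, Set.mem_ofPred_eq, List.getD_eq_getElem _ _ hi]
    exact ⟨hi, hb.2⟩

section PartialWeights

variable {Y : Type*} {f g : ℕ → Y → ℝ} {p q : ℕ}

noncomputable def partialWeight (f : ℕ → Y → ℝ) (p i : ℕ) (x : Y) : ℝ :=
  (∑ k ∈ range i, f k x) / ∑ k ∈ range p, f k x

theorem partialWeight_zero (f : ℕ → Y → ℝ) (p : ℕ) (x : Y) : partialWeight f p 0 x = 0 := by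
  simp [partialWeight]

theorem sum_range_pos_of_exists_pos (hf0 : ∀ i x, 0 ≤ f i x) {x : Y} (hx : ∃ i < p, 0 < f i x) :
    0 < ∑ k ∈ range p, f k x :=
  sum_pos' (fun k _ => hf0 k x) (by simpa using hx)

theorem partialWeight_self (hf0 : ∀ i x, 0 ≤ f i x) {x : Y} (hx : ∃ i < p, 0 < f i x) :
    partialWeight f p p x = 1 :=
  div_self (sum_range_pos_of_exists_pos hf0 hx).ne'

theorem monotone_partialWeight (hf0 : ∀ i x, 0 ≤ f i x) (x : Y) :
    Monotone fun i => partialWeight f p i x := fun _ _ hij =>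
  div_le_div_of_nonneg_right
    (sum_le_sum_of_subset_of_nonneg (range_subset_range.mpr hij) fun k _ _ => hf0 k x)
    (sum_nonneg fun k _ => hf0 k x)

theorem partialWeight_zero_lt_self (hf0 : ∀ i x, 0 ≤ f i x) {x : Y} (hx : ∃ i < p, 0 < f i x) :
    partialWeight f p 0 x < partialWeight f p p x := by
  rw [partialWeight_zero, partialWeight_self hf0 hx]
  exact one_pos

theorem partialWeight_lt_succ_iff (hf0 : ∀ i x, 0 ≤ f i x) {x : Y} (hx : ∃ i < p, 0 < f i x)
    (i : ℕ) : partialWeight f p i x < partialWeight f p (i + 1) x ↔ 0 < f i x := by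
  rw [partialWeight, partialWeight, sum_range_succ, add_div, lt_add_iff_pos_right,
    div_pos_iff_of_pos_right (sum_range_pos_of_exists_pos hf0 hx)]

theorem continuous_partialWeight [TopologicalSpace Y] (hf : ∀ i, Continuous (f i))
    (hf0 : ∀ i x, 0 ≤ f i x) (hfp : ∀ x, ∃ i < p, 0 < f i x) (i : ℕ) :
    Continuous (partialWeight f p i) :=
  (continuous_finsetSum _ fun k _ => hf k).div (continuous_finsetSum _ fun k _ => hf k)
    fun x => (sum_range_pos_of_exists_pos hf0 (hfp x)).ne'

def overlapSet (f g : ℕ → Y → ℝ) (p q i j : ℕ) : Set Y :=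
  {x | IntervalsOverlap (partialWeight f p · x) (partialWeight g q · x) i j}

theorem mem_overlapSet {i j : ℕ} {x : Y} : x ∈ overlapSet f g p q i j ↔
    IntervalsOverlap (partialWeight f p · x) (partialWeight g q · x) i j :=
  Iff.rfl

theorem isOpen_overlapSet [TopologicalSpace Y] (hf : ∀ i, Continuous (f i))
    (hg : ∀ j, Continuous (g j)) (hf0 : ∀ i x, 0 ≤ f i x) (hg0 : ∀ j x, 0 ≤ g j x)
    (hfp : ∀ x, ∃ i < p, 0 < f i x) (hgq : ∀ x, ∃ j < q, 0 < g j x) (i j : ℕ) :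
    IsOpen (overlapSet f g p q i j) := by
  have hF := continuous_partialWeight hf hf0 hfp
  have hG := continuous_partialWeight hg hg0 hgq
  exact isOpen_lt ((hF i).max (hG j)) ((hF (i + 1)).min (hG (j + 1)))

theorem overlapSet_subset (hf0 : ∀ i x, 0 ≤ f i x) (hg0 : ∀ j x, 0 ≤ g j x)
    (hfp : ∀ x, ∃ i < p, 0 < f i x) (hgq : ∀ x, ∃ j < q, 0 < g j x) (i j : ℕ) :
    overlapSet f g p q i j ⊆ {x | 0 < f i x} ∩ {x | 0 < g j x} :=
  fun x hx =>
    ⟨(partialWeight_lt_succ_iff hf0 (hfp x) i).mp (mem_overlapSet.mp hx).lt_succ_left,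
      (partialWeight_lt_succ_iff hg0 (hgq x) j).mp (mem_overlapSet.mp hx).lt_succ_right⟩

theorem exists_mem_overlapSet (hf0 : ∀ i x, 0 ≤ f i x) (hg0 : ∀ j x, 0 ≤ g j x)
    (hfp : ∀ x, ∃ i < p, 0 < f i x) (hgq : ∀ x, ∃ j < q, 0 < g j x) (x : Y) :
    ∃ i < p, ∃ j < q, x ∈ overlapSet f g p q i j :=
  exists_intervalsOverlap (monotone_partialWeight hf0 x) (monotone_partialWeight hg0 x)
    (by rw [partialWeight_zero, partialWeight_zero]) (partialWeight_zero_lt_self hf0 (hfp x))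
    (partialWeight_zero_lt_self hg0 (hgq x))

theorem card_overlapSet_add_one_le (hf0 : ∀ i x, 0 ≤ f i x) (hg0 : ∀ j x, 0 ≤ g j x)
    (hfp : ∀ x, ∃ i < p, 0 < f i x) (hgq : ∀ x, ∃ j < q, 0 < g j x) (x : Y) :
    #{ij ∈ range p ×ˢ range q | x ∈ overlapSet f g p q ij.1 ij.2} + 1 ≤
      #{i ∈ range p | 0 < f i x} + #{j ∈ range q | 0 < g j x} := by
  have h := card_intervalsOverlap_add_one_le (monotone_partialWeight hf0 x)
    (monotone_partialWeight hg0 x) (by rw [partialWeight_zero, partialWeight_zero])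
    (partialWeight_zero_lt_self hf0 (hfp x)) (partialWeight_zero_lt_self hg0 (hgq x))
  rwa [filter_congr fun i _ => partialWeight_lt_succ_iff hf0 (hfp x) i,
    filter_congr fun j _ => partialWeight_lt_succ_iff hg0 (hgq x) j] at h

end PartialWeights

section Covers

variable {Y : Type*}

theorem ordC_le_of_forall_card_le {α : Finset (Set Y)} {n : ℕ}
    (h : ∀ y, #{A ∈ α | y ∈ A} ≤ n + 1) : ordC α ≤ n :=
  csSup_le' fun m ⟨y, hy⟩ => by have := h y; omega

theorem card_le_ordC_add_one (α : Finset (Set Y)) (y : Y) : #{A ∈ α | y ∈ A} ≤ ordC α + 1 := by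
  by_contra! hlt
  have hbdd : BddAbove {m : ℕ | ∃ y : Y, m + 1 ≤ #{A ∈ α | y ∈ A}} :=
    ⟨#α, fun m ⟨z, hz⟩ => by have := card_filter_le α (z ∈ ·); omega⟩
  have : ordC α + 1 ≤ ordC α := le_csSup hbdd ⟨y, hlt⟩
  omega

theorem RefinesC.refl (α : Finset (Set Y)) : RefinesC α α :=
  fun A hA => ⟨A, hA, subset_rfl⟩

theorem RefinesC.trans {α β γ : Finset (Set Y)} (hγβ : RefinesC γ β) (hβα : RefinesC β α) :
    RefinesC γ α := fun C hC =>
  let ⟨B, hB, hCB⟩ := hγβ C hC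
  let ⟨A, hA, hBA⟩ := hβα B hB
  ⟨A, hA, hCB.trans hBA⟩

theorem RefinesC.joinC {α β γ δ : Finset (Set Y)} (hγα : RefinesC γ α) (hδβ : RefinesC δ β) :
    RefinesC (joinC γ δ) (joinC α β) := by
  intro E hE
  obtain ⟨⟨C, D⟩, hCD, rfl⟩ := mem_image.mp hE
  obtain ⟨hC, hD⟩ := mem_product.mp hCD
  obtain ⟨A, hA, hCA⟩ := hγα C hC
  obtain ⟨B, hB, hDB⟩ := hδβ D hD
  exact ⟨A ∩ B, mem_image.mpr ⟨(A, B), mem_product.mpr ⟨hA, hB⟩, rfl⟩,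
    Set.inter_subset_inter hCA hDB⟩

variable [TopologicalSpace Y]

theorem Dcov_le_ordC {α β : Finset (Set Y)} (hβ : IsOpenCover β) (hβα : RefinesC β α) :
    Dcov α ≤ ordC β :=
  Nat.sInf_le ⟨β, hβ, hβα, rfl⟩

theorem IsOpenCover.exists_ordC_eq_Dcov {α : Finset (Set Y)} (hα : IsOpenCover α) :
    ∃ β, IsOpenCover β ∧ RefinesC β α ∧ ordC β = Dcov α :=
  Nat.sInf_mem (s := {m | ∃ β, IsOpenCover β ∧ RefinesC β α ∧ ordC β = m})
    ⟨ordC α, α, hα, RefinesC.refl α, rfl⟩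

variable [PerfectlyNormalSpace Y]

theorem IsOpen.exists_continuous_pos_iff {U : Set Y} (hU : IsOpen U) :
    ∃ w : Y → ℝ, Continuous w ∧ (∀ x, 0 ≤ w x) ∧ ∀ x, 0 < w x ↔ x ∈ U := by
  obtain ⟨w, hzero, hrange⟩ :=
    perfectlyNormalSpace_iff_forall_isClosed_preimage_zero.mp ‹_› Uᶜ hU.isClosed_compl
  refine ⟨w, w.continuous, fun x => (hrange x).1, fun x => ?_⟩
  rw [(hrange x).1.lt_iff_ne', ← not_iff_not, not_not, ← Set.mem_compl_iff, hzero]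
  rfl

theorem IsOpenCover.exists_weights {γ : Finset (Set Y)} (hγ : IsOpenCover γ) :
    ∃ (p : ℕ) (f : ℕ → Y → ℝ), (∀ i, Continuous (f i)) ∧ (∀ i x, 0 ≤ f i x) ∧
      (∀ x, ∃ i < p, 0 < f i x) ∧ (∀ i < p, {x | 0 < f i x} ∈ γ) ∧
      ∀ x, #{i ∈ range p | 0 < f i x} = #{A ∈ γ | x ∈ A} := by
  set l := γ.toList
  have hC_mem : ∀ i < l.length, l.getD i ∅ ∈ γ := fun i hi => by
    rw [List.getD_eq_getElem _ _ hi]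
    exact mem_toList.mp (List.getElem_mem hi)
  have hC_open : ∀ i, IsOpen (l.getD i ∅) := fun i => by
    by_cases hi : i < l.length
    · exact hγ.1 _ (hC_mem i hi)
    · rw [List.getD_eq_default _ _ (not_lt.mp hi)]
      exact isOpen_empty
  choose f hf hf0 hfC using fun i => (hC_open i).exists_continuous_pos_iff
  have hcard : ∀ x, #{i ∈ range l.length | 0 < f i x} = #{A ∈ γ | x ∈ A} := fun x => by
    rw [filter_congr fun i _ => hfC i x]
    exact card_filter_range_getD_toList γ ∅ (x ∈ ·)
  refine ⟨l.length, f, hf, hf0, fun x => ?_, fun i hi => ?_, hcard⟩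
  · obtain ⟨A, hA, hxA⟩ := Set.mem_sUnion.mp (hγ.2.symm ▸ Set.mem_univ x)
    obtain ⟨i, hi⟩ := card_pos.mp ((hcard x).symm ▸ card_pos.mpr ⟨A, mem_filter.mpr ⟨hA, hxA⟩⟩)
    rw [mem_filter, mem_range] at hi
    exact ⟨i, hi⟩
  · convert hC_mem i hi
    exact Set.ext (hfC i)

end Covers

theorem IsOpenCover.exists_refinesC_joinC_ordC_le {Y : Type*} [TopologicalSpace Y]
    [PerfectlyNormalSpace Y] {γ δ : Finset (Set Y)} (hγ : IsOpenCover γ) (hδ : IsOpenCover δ) :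
    ∃ ε, IsOpenCover ε ∧ RefinesC ε (joinC γ δ) ∧ ordC ε ≤ ordC γ + ordC δ := by
  obtain ⟨p, f, hf, hf0, hfp, hfγ, hf_card⟩ := hγ.exists_weights
  obtain ⟨q, g, hg, hg0, hgq, hgδ, hg_card⟩ := hδ.exists_weights
  set W : ℕ × ℕ → Set Y := fun ij => overlapSet f g p q ij.1 ij.2
  refine ⟨(range p ×ˢ range q).image W, ⟨?_, ?_⟩, ?_, ?_⟩
  · simp only [mem_image]
    rintro _ ⟨⟨i, j⟩, -, rfl⟩
    exact isOpen_overlapSet hf hg hf0 hg0 hfp hgq i j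
  · refine Set.eq_univ_of_forall fun x => ?_
    obtain ⟨i, hi, j, hj, hx⟩ := exists_mem_overlapSet hf0 hg0 hfp hgq x
    refine ⟨W (i, j), ?_, hx⟩
    exact mem_image_of_mem W (mem_product.mpr ⟨mem_range.mpr hi, mem_range.mpr hj⟩)
  · simp only [RefinesC, mem_image]
    rintro _ ⟨⟨i, j⟩, hij, rfl⟩
    obtain ⟨hi, hj⟩ := mem_product.mp hij
    refine ⟨_, mem_image.mpr ⟨(_, _), mem_product.mpr ⟨hfγ i (mem_range.mp hi),
      hgδ j (mem_range.mp hj)⟩, rfl⟩, overlapSet_subset hf0 hg0 hfp hgq i j⟩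
  · refine ordC_le_of_forall_card_le fun x => ?_
    have h_pairs : #{E ∈ (range p ×ˢ range q).image W | x ∈ E} ≤
        #{ij ∈ range p ×ˢ range q | x ∈ overlapSet f g p q ij.1 ij.2} := by
      rw [filter_image]
      exact card_image_le
    have h_overlap := card_overlapSet_add_one_le hf0 hg0 hfp hgq x
    rw [hf_card, hg_card] at h_overlap
    have := card_le_ordC_add_one γ x
    have := card_le_ordC_add_one δ x
    omega

theorem stmt10_general {Y : Type*} [MetricSpace Y]
    (α β : Finset (Set Y)) (hα : IsOpenCover α) (hβ : IsOpenCover β) :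
    Dcov (joinC α β) ≤ Dcov α + Dcov β := by
  obtain ⟨γ, hγ, hγα, hγ_ord⟩ := hα.exists_ordC_eq_Dcov
  obtain ⟨δ, hδ, hδβ, hδ_ord⟩ := hβ.exists_ordC_eq_Dcov
  obtain ⟨ε, hε, hεγδ, hε_ord⟩ := hγ.exists_refinesC_joinC_ordC_le hδ
  calc Dcov (joinC α β) ≤ ordC ε := Dcov_le_ordC hε (hεγδ.trans (hγα.joinC hδβ))
    _ ≤ ordC γ + ordC δ := hε_ord
    _ = Dcov α + Dcov β := by rw [hγ_ord, hδ_ord]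

/-- Subadditivity of `D`: `D(α ∨ β) ≤ D(α) + D(β)` for finite open covers of a compact
metric space. -/
theorem stmt10 {Y : Type*} [MetricSpace Y] [CompactSpace Y]
    (α β : Finset (Set Y)) (hα : IsOpenCover α) (hβ : IsOpenCover β) :
    Dcov (joinC α β) ≤ Dcov α + Dcov β :=
  stmt10_general α β hα hβ
end

section
/- Let f : 𝔉_Γ → ℝ_{≥0} be a right-invariant subadditive function on the finite nonempty subsets of a countably infinite amenable group Γ, i.e., f(Fg) = f(F) and f(E ∪ F) ≤ f(E) + f(F) for all E, F ∈ 𝔉_Γ, g ∈ Γ. Then for any Følner sequence (F_n) of Γ, the limit lim_{n→∞} f(F_n)/|F_n| exists, and its value is independent of the choice of Følner sequence. -/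
/-!
Write `ρ_H = liminf f(H n)/|H n|` for a Følner sequence `H`. Pick shapes `E₀, …, E_{K-1}` among
the `H n` with `f(Eᵢ) ≤ (ρ_H + ε)|Eᵢ|`, each `Eᵢ` almost invariant under the earlier ones. A
sufficiently invariant finite set `F₀` is then quasi-tiled (Ornstein–Weiss): laying down
ε-disjoint right translates of `E_{K-1}`, then `E_{K-2}`, …, each round covers an `ε`-fraction of
what is left, so after `K` rounds only `O(ε)|F₀|` points remain. Right invariance and
subadditivity give `f(F₀) ≤ (ρ_H + ε)|F₀|/(1 - ε) + O(ε) f({1}) |F₀|`, hence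
`limsup f(G n)/|G n| ≤ ρ_H` for any two Følner sequences `G`, `H`. Taking `G = H` and then
exchanging them, all these limits exist and agree.
-/

open Filter

/-- A Følner sequence: a sequence of nonempty finite subsets `F n` of the group such that
`|F n Δ g F n| / |F n| → 0` for every `g`. -/
def IsFolner {Γ : Type*} [Group Γ] [DecidableEq Γ] (F : ℕ → Finset Γ) : Prop :=
  (∀ n, (F n).Nonempty) ∧
    ∀ g : Γ, Tendsto
      (fun n => ((symmDiff (F n) ((F n).image (fun x => g * x))).card : ℝ) / (F n).card)
      atTop (nhds 0)

open Finset Pointwise MulOpposite Topology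

namespace OrnsteinWeiss

section

variable {α : Type*} [DecidableEq α]

/-- Counting form of Ornstein–Weiss ε-disjointness: translates with pairwise disjoint cores of
relative size `1 - ε` satisfy it, and nothing more is used. -/
def IsEpsDisjoint (ε : ℝ) (𝒯 : Finset (Finset α)) : Prop :=
  (1 - ε) * ∑ T ∈ 𝒯, (#T : ℝ) ≤ #(𝒯.biUnion id)

variable {ε : ℝ} {𝒮 𝒯 : Finset (Finset α)}

theorem IsEpsDisjoint.insert (h : IsEpsDisjoint ε 𝒮) {T : Finset α}
    (hT : (1 - ε) * #T ≤ #(T \ 𝒮.biUnion id)) : IsEpsDisjoint ε (insert T 𝒮) := by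
  by_cases hT𝒮 : T ∈ 𝒮
  · rwa [insert_eq_of_mem hT𝒮]
  · unfold IsEpsDisjoint at *
    rw [sum_insert hT𝒮, biUnion_insert, id, ← card_sdiff_add_card]
    push_cast
    linarith

theorem IsEpsDisjoint.union (hε : ε ≤ 1) (h𝒯 : IsEpsDisjoint ε 𝒯) (h𝒮 : IsEpsDisjoint ε 𝒮)
    (hd : Disjoint (𝒯.biUnion id) (𝒮.biUnion id)) : IsEpsDisjoint ε (𝒯 ∪ 𝒮) := by
  have hsum : ∑ T ∈ 𝒯 ∪ 𝒮, (#T : ℝ) ≤ ∑ T ∈ 𝒯, (#T : ℝ) + ∑ T ∈ 𝒮, (#T : ℝ) := by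
    rw [← sum_union_inter]
    exact le_add_of_nonneg_right (sum_nonneg fun _ _ => by positivity)
  unfold IsEpsDisjoint at *
  rw [union_biUnion, card_union_of_disjoint hd]
  push_cast
  nlinarith [mul_le_mul_of_nonneg_left hsum (sub_nonneg.2 hε)]

theorem IsEpsDisjoint.sum_card_le (h : IsEpsDisjoint ε 𝒯) (hε : ε < 1) {F : Finset α}
    (hF : ∀ T ∈ 𝒯, T ⊆ F) : ∑ T ∈ 𝒯, (#T : ℝ) ≤ #F / (1 - ε) := by
  rw [le_div_iff₀ (sub_pos.2 hε), mul_comm]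
  exact h.trans (by exact_mod_cast card_le_card (biUnion_subset.2 hF))

theorem apply_biUnion_le_sum {f : Finset α → ℝ}
    (hsub : ∀ E F : Finset α, E.Nonempty → F.Nonempty → f (E ∪ F) ≤ f E + f F)
    {ι : Type*} {s : Finset ι} (hs : s.Nonempty) {g : ι → Finset α}
    (hg : ∀ i ∈ s, (g i).Nonempty) : f (s.biUnion g) ≤ ∑ i ∈ s, f (g i) := by
  classical
  induction hs using Finset.Nonempty.cons_induction with
  | singleton a => simp
  | cons a s ha hs ih =>
    rw [sum_cons, cons_eq_insert, biUnion_insert]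
    have hgs : ∀ i ∈ s, (g i).Nonempty := fun i hi => hg i (mem_cons_of_mem hi)
    refine (hsub _ _ (hg a (mem_cons_self a s)) (biUnion_nonempty.2 ?_)).trans
      (add_le_add le_rfl (ih hgs))
    obtain ⟨i, hi⟩ := hs
    exact ⟨i, hi, hgs i hi⟩

end

variable {Γ : Type*} [Group Γ] [DecidableEq Γ]

def tileCenters (E F : Finset Γ) : Finset Γ := F.filter fun c => op c • E ⊆ F

theorem mem_tileCenters {E F : Finset Γ} {c : Γ} :
    c ∈ tileCenters E F ↔ c ∈ F ∧ ∀ e ∈ E, e * c ∈ F := by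
  simp [tileCenters, subset_iff, mem_smul_finset]

theorem card_sdiff_tileCenters_le (E F : Finset Γ) :
    #(F \ tileCenters E F) ≤ ∑ e ∈ E, #(e • F \ F) := by
  calc #(F \ tileCenters E F) ≤ #(E.biUnion fun e => e⁻¹ • (e • F \ F)) := card_le_card ?_
    _ ≤ ∑ e ∈ E, #(e⁻¹ • (e • F \ F)) := card_biUnion_le
    _ = ∑ e ∈ E, #(e • F \ F) := by simp only [card_smul_finset]
  intro c hc
  simp only [Finset.mem_sdiff, mem_tileCenters, not_and, not_forall] at hc
  obtain ⟨e, he, hec⟩ := hc.2 hc.1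
  refine mem_biUnion.2 ⟨e, he, mem_smul_finset.2 ⟨e * c, ?_, by simp⟩⟩
  exact mem_sdiff.2 ⟨smul_mem_smul_finset hc.1, hec⟩

theorem card_mul_sdiff_le (S T : Finset Γ) : #((S * T) \ T) ≤ ∑ g ∈ S, #(g • T \ T) := by
  refine (card_le_card fun x hx => ?_).trans card_biUnion_le
  obtain ⟨hx, hxT⟩ := mem_sdiff.1 hx
  obtain ⟨g, hg, t, ht, rfl⟩ := mem_mul.1 hx
  exact mem_biUnion.2 ⟨g, hg, mem_sdiff.2 ⟨smul_mem_smul_finset ht, hxT⟩⟩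

theorem card_mul_op_smul_sdiff (S T : Finset Γ) (c : Γ) :
    #((S * op c • T) \ op c • T) = #((S * T) \ T) := by
  rw [mul_smul_comm, ← smul_finset_sdiff, card_smul_finset]

theorem sdiff_tileCenters_sdiff_subset (E F₀ : Finset Γ) (𝒯 : Finset (Finset Γ)) :
    (F₀ \ 𝒯.biUnion id) \ tileCenters E (F₀ \ 𝒯.biUnion id) ⊆
      (F₀ \ tileCenters E F₀) ∪ 𝒯.biUnion fun T => (E⁻¹ * T) \ T := by
  intro c hc
  simp only [Finset.mem_sdiff, mem_tileCenters, not_and, not_forall] at hc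
  obtain ⟨⟨hcF₀, hc𝒯⟩, hbad⟩ := hc
  obtain ⟨e, he, hec⟩ := hbad ⟨hcF₀, hc𝒯⟩
  by_cases hecF₀ : e * c ∈ F₀
  · obtain ⟨T, hT, hecT⟩ := mem_biUnion.1 (not_not.1 (hec hecF₀))
    refine mem_union_right _ (mem_biUnion.2 ⟨T, hT, mem_sdiff.2 ⟨?_, ?_⟩⟩)
    · simpa using mul_mem_mul (inv_mem_inv he) hecT
    · exact fun hcT => hc𝒯 (mem_biUnion.2 ⟨T, hT, hcT⟩)
  · exact mem_union_left _ (mem_sdiff.2 ⟨hcF₀, fun h => hecF₀ ((mem_tileCenters.1 h).2 e he)⟩)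

theorem card_mul_le_of_le_card_inter {E U D : Finset Γ} {a : ℝ}
    (h : ∀ c ∈ D, a ≤ #(op c • E ∩ U)) : a * #D ≤ #E * #U := by
  let r : Γ → Γ → Prop := fun c u => u ∈ op c • E
  have hcover : ∀ u ∈ U, #(D.bipartiteBelow r u) ≤ #E := fun u _ =>
    card_le_card_of_injOn (fun c => u * c⁻¹)
      (fun c hc => by
        obtain ⟨e, he, rfl⟩ := mem_smul_finset.1 (mem_filter.1 hc).2
        simpa [op_smul_eq_mul] using he)
      (fun c _ d _ hcd => by simpa using hcd)
  have hdouble : ∑ c ∈ D, #(op c • E ∩ U) = ∑ u ∈ U, #(D.bipartiteBelow r u) := by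
    rw [← sum_card_bipartiteAbove_eq_sum_card_bipartiteBelow]
    refine sum_congr rfl fun c _ => ?_
    rw [bipartiteAbove, filter_mem_eq_inter, inter_comm]
  calc a * #D = ∑ _c ∈ D, a := by rw [sum_const, nsmul_eq_mul, mul_comm]
    _ ≤ ∑ c ∈ D, (#(op c • E ∩ U) : ℝ) := sum_le_sum h
    _ ≤ ∑ _u ∈ U, (#E : ℝ) := by exact_mod_cast hdouble ▸ sum_le_sum hcover
    _ = #E * #U := by rw [sum_const, nsmul_eq_mul, mul_comm]

theorem exists_epsDisjoint_cover {E : Finset Γ} (hE : E.Nonempty) {ε : ℝ} (hε : ε < 1)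
    (F : Finset Γ) :
    ∃ 𝒮 : Finset (Finset Γ), (∀ T ∈ 𝒮, T ⊆ F ∧ ∃ c : Γ, T = op c • E) ∧ IsEpsDisjoint ε 𝒮 ∧
      ε * #(tileCenters E F) ≤ #(𝒮.biUnion id) := by
  classical
  let tiles := (tileCenters E F).image fun c => op c • E
  obtain ⟨𝒮, h𝒮, hmax⟩ := exists_max_image (tiles.powerset.filter (IsEpsDisjoint ε))
    (fun 𝒮 => #(𝒮.biUnion id)) ⟨∅, by simp [IsEpsDisjoint]⟩
  rw [mem_filter, mem_powerset] at h𝒮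
  set U := 𝒮.biUnion id
  have hmeet : ∀ c ∈ tileCenters E F, ε * #E ≤ #(op c • E ∩ U) := by
    intro c hc
    -- otherwise `op c • E` could be added to `𝒮`, against maximality
    by_contra! hsmall
    have hnew : (1 - ε) * #(op c • E) ≤ #(op c • E \ U) := by
      have hsplit := card_sdiff_add_card_inter (op c • E) U
      rw [card_smul_finset] at hsplit ⊢
      have : (#(op c • E \ U) : ℝ) + #(op c • E ∩ U) = #E := by exact_mod_cast hsplit
      linarith
    have hgrow : #U < #((insert (op c • E) 𝒮).biUnion id) := by
      have hpos : (0 : ℝ) < #(op c • E \ U) :=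
        lt_of_lt_of_le (mul_pos (sub_pos.2 hε) (by simpa using hE.card_pos)) hnew
      rw [biUnion_insert, id, ← card_sdiff_add_card]
      change #U < #(op c • E \ U) + #U
      exact Nat.lt_add_of_pos_left (by exact_mod_cast hpos)
    refine hgrow.not_ge (hmax _ (mem_filter.2 ⟨?_, h𝒮.2.insert hnew⟩))
    exact mem_powerset.2 (insert_subset (mem_image_of_mem _ hc) h𝒮.1)
  refine ⟨𝒮, fun T hT => ?_, h𝒮.2, ?_⟩
  · obtain ⟨c, hc, rfl⟩ := mem_image.1 (h𝒮.1 hT)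
    exact ⟨(mem_filter.1 hc).2, c, rfl⟩
  · have hcount := card_mul_le_of_le_card_inter hmeet
    have hE' : (0 : ℝ) < #E := by exact_mod_cast hE.card_pos
    nlinarith

/-- `A + η |F₀| / (1 - ε)` bounds the points of `F₀ \ ⋃ 𝒯` that are not centres of a translate of
`E` inside it: they lie near the boundary of `F₀` or near the `E`-boundary of a tile of `𝒯`. -/
theorem exists_epsDisjoint_extension {E F₀ : Finset Γ} (hE : E.Nonempty) {ε η A : ℝ}
    (hε0 : 0 < ε) (hε1 : ε < 1) (hη : 0 ≤ η) {𝒯 : Finset (Finset Γ)} (h𝒯 : IsEpsDisjoint ε 𝒯)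
    (h𝒯F₀ : ∀ T ∈ 𝒯, T ⊆ F₀) (hinvar : ∀ T ∈ 𝒯, #((E⁻¹ * T) \ T) ≤ η * #T)
    (hbdry : #(F₀ \ tileCenters E F₀) ≤ A) :
    ∃ 𝒮 : Finset (Finset Γ), (∀ T ∈ 𝒮, T ⊆ F₀ ∧ ∃ c : Γ, T = op c • E) ∧
      IsEpsDisjoint ε (𝒯 ∪ 𝒮) ∧
      #(F₀ \ (𝒯 ∪ 𝒮).biUnion id) - (A + η * #F₀ / (1 - ε)) ≤
        (1 - ε) * (#(F₀ \ 𝒯.biUnion id) - (A + η * #F₀ / (1 - ε))) := by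
  set F := F₀ \ 𝒯.biUnion id
  set B := A + η * #F₀ / (1 - ε)
  have hbdryF : (#(F \ tileCenters E F) : ℝ) ≤ B := calc
    _ ≤ (#(F₀ \ tileCenters E F₀) : ℝ) + ∑ T ∈ 𝒯, (#((E⁻¹ * T) \ T) : ℝ) := by
        exact_mod_cast (card_le_card (sdiff_tileCenters_sdiff_subset E F₀ 𝒯)).trans
          ((card_union_le _ _).trans (Nat.add_le_add_left card_biUnion_le _))
    _ ≤ A + ∑ T ∈ 𝒯, η * #T := add_le_add hbdry (sum_le_sum hinvar)
    _ ≤ A + η * (#F₀ / (1 - ε)) := by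
        rw [← mul_sum]
        gcongr
        exact h𝒯.sum_card_le hε1 h𝒯F₀
    _ = B := by simp only [B, mul_div_assoc]
  have hcenters : (#F : ℝ) - B ≤ #(tileCenters E F) := by
    have := card_sdiff_add_card_eq_card (filter_subset (fun c => op c • E ⊆ F) F)
    have : (#(F \ tileCenters E F) : ℝ) + #(tileCenters E F) = #F := by exact_mod_cast this
    linarith
  obtain ⟨𝒮, h𝒮F, h𝒮, hcover⟩ := exists_epsDisjoint_cover hE hε1 F
  have hUF : 𝒮.biUnion id ⊆ F := biUnion_subset.2 fun T hT => (h𝒮F T hT).1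
  refine ⟨𝒮, fun T hT => ⟨(h𝒮F T hT).1.trans sdiff_subset, (h𝒮F T hT).2⟩,
    h𝒯.union hε1.le h𝒮 (disjoint_of_subset_right hUF disjoint_sdiff), ?_⟩
  have hrem : F₀ \ (𝒯 ∪ 𝒮).biUnion id = F \ 𝒮.biUnion id := by
    rw [union_biUnion]
    exact sdiff_sdiff_left.symm
  rw [hrem, card_sdiff_of_subset hUF, Nat.cast_sub (card_le_card hUF)]
  nlinarith

theorem exists_quasiTiling (E : ℕ → Finset Γ) {K : ℕ} {ε η A : ℝ} {F₀ : Finset Γ}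
    (hε0 : 0 < ε) (hε1 : ε < 1) (hη : 0 ≤ η) (hE : ∀ i < K, (E i).Nonempty)
    (hinvar : ∀ s i, s < i → i < K → #(((E s)⁻¹ * E i) \ E i) ≤ η * #(E i))
    (hbdry : ∀ s < K, #(F₀ \ tileCenters (E s) F₀) ≤ A) (k : ℕ) (hk : k ≤ K)
    (𝒯 : Finset (Finset Γ)) (h𝒯 : IsEpsDisjoint ε 𝒯)
    (h𝒯F₀ : ∀ T ∈ 𝒯, T ⊆ F₀ ∧ ∃ i ∈ Set.Ico k K, ∃ c : Γ, T = op c • E i) :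
    ∃ 𝒯' : Finset (Finset Γ), IsEpsDisjoint ε 𝒯' ∧
      (∀ T ∈ 𝒯', T ⊆ F₀ ∧ ∃ i < K, ∃ c : Γ, T = op c • E i) ∧
      #(F₀ \ 𝒯'.biUnion id) - (A + η * #F₀ / (1 - ε)) ≤
        (1 - ε) ^ k * (#(F₀ \ 𝒯.biUnion id) - (A + η * #F₀ / (1 - ε))) := by
  induction k generalizing 𝒯 with
  | zero =>
    refine ⟨𝒯, h𝒯, fun T hT => ?_, by simp⟩
    obtain ⟨hTF₀, i, hi, c, rfl⟩ := h𝒯F₀ T hT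
    exact ⟨hTF₀, i, hi.2, c, rfl⟩
  | succ k ih =>
    have hinvar𝒯 : ∀ T ∈ 𝒯, #(((E k)⁻¹ * T) \ T) ≤ η * #T := by
      intro T hT
      obtain ⟨-, i, hi, c, rfl⟩ := h𝒯F₀ T hT
      rw [card_mul_op_smul_sdiff, card_smul_finset]
      exact hinvar k i hi.1 hi.2
    obtain ⟨𝒮, h𝒮, h𝒯𝒮, hstep⟩ := exists_epsDisjoint_extension (hE k hk) hε0 hε1 hη h𝒯
      (fun T hT => (h𝒯F₀ T hT).1) hinvar𝒯 (hbdry k hk)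
    obtain ⟨𝒯', h𝒯', h𝒯'F₀, hrem⟩ := ih (by omega) (𝒯 ∪ 𝒮) h𝒯𝒮 fun T hT => by
      rcases mem_union.1 hT with hT | hT
      · obtain ⟨hTF₀, i, hi, c, rfl⟩ := h𝒯F₀ T hT
        exact ⟨hTF₀, i, ⟨Nat.le_of_succ_le hi.1, hi.2⟩, c, rfl⟩
      · obtain ⟨hTF₀, c, rfl⟩ := h𝒮 T hT
        exact ⟨hTF₀, k, ⟨le_rfl, hk⟩, c, rfl⟩
    refine ⟨𝒯', h𝒯', h𝒯'F₀, hrem.trans ?_⟩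
    rw [pow_succ, mul_assoc]
    exact mul_le_mul_of_nonneg_left hstep (pow_nonneg (sub_nonneg.2 hε1.le) k)

theorem apply_le_sum_add_card_sdiff_mul {f : Finset Γ → ℝ}
    (hinv : ∀ (F : Finset Γ) (g : Γ), F.Nonempty → f (F.image (fun x => x * g)) = f F)
    (hsub : ∀ E F : Finset Γ, E.Nonempty → F.Nonempty → f (E ∪ F) ≤ f E + f F)
    {F₀ : Finset Γ} (hF₀ : F₀.Nonempty) {𝒯 : Finset (Finset Γ)}
    (h𝒯 : ∀ T ∈ 𝒯, T.Nonempty ∧ T ⊆ F₀) :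
    f F₀ ≤ ∑ T ∈ 𝒯, f T + #(F₀ \ 𝒯.biUnion id) * f {1} := by
  set R := F₀ \ 𝒯.biUnion id
  have hsingleton (x : Γ) : f {x} = f {1} := by simpa using hinv {1} x (singleton_nonempty 1)
  -- Indexing the tiles and the uncovered points together, a single use of subadditivity
  -- handles both without ever evaluating `f ∅`.
  have hcover : (𝒯.disjSum R).biUnion (Sum.elim id singleton) = F₀ := by
    ext x
    simp only [mem_biUnion, Sum.exists, inl_mem_disjSum, inr_mem_disjSum, Sum.elim_inl,
      Sum.elim_inr, id, mem_singleton]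
    constructor
    · rintro (⟨T, hT, hxT⟩ | ⟨y, hy, rfl⟩)
      exacts [(h𝒯 T hT).2 hxT, (Finset.mem_sdiff.1 hy).1]
    · intro hx
      by_cases hxU : x ∈ 𝒯.biUnion id
      · exact Or.inl (by simpa using hxU)
      · exact Or.inr ⟨x, Finset.mem_sdiff.2 ⟨hx, hxU⟩, rfl⟩
  have hpieces : ∀ i ∈ 𝒯.disjSum R, (Sum.elim id singleton i : Finset Γ).Nonempty := by
    rintro (T | x) hi
    exacts [(h𝒯 T (inl_mem_disjSum.1 hi)).1, singleton_nonempty x]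
  obtain ⟨i, hi, -⟩ := biUnion_nonempty.1 (hcover ▸ hF₀)
  calc f F₀ = f ((𝒯.disjSum R).biUnion (Sum.elim id singleton)) := by rw [hcover]
    _ ≤ ∑ i ∈ 𝒯.disjSum R, f (Sum.elim id singleton i) :=
        apply_biUnion_le_sum hsub ⟨i, hi⟩ hpieces
    _ = ∑ T ∈ 𝒯, f T + #R * f {1} := by simp [sum_disjSum, hsingleton]

theorem div_card_mem_Icc {f : Finset Γ → ℝ} (hnonneg : ∀ F : Finset Γ, F.Nonempty → 0 ≤ f F)
    (hinv : ∀ (F : Finset Γ) (g : Γ), F.Nonempty → f (F.image (fun x => x * g)) = f F)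
    (hsub : ∀ E F : Finset Γ, E.Nonempty → F.Nonempty → f (E ∪ F) ≤ f E + f F)
    {F : Finset Γ} (hF : F.Nonempty) : f F / #F ∈ Set.Icc 0 (f {1}) := by
  have hpos : (0 : ℝ) < #F := by exact_mod_cast hF.card_pos
  refine ⟨div_nonneg (hnonneg F hF) hpos.le, ?_⟩
  rw [div_le_iff₀ hpos]
  simpa [mul_comm] using apply_le_sum_add_card_sdiff_mul hinv hsub hF (𝒯 := ∅) (by simp)

theorem apply_le_of_shapes {f : Finset Γ → ℝ}
    (hnonneg : ∀ F : Finset Γ, F.Nonempty → 0 ≤ f F)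
    (hinv : ∀ (F : Finset Γ) (g : Γ), F.Nonempty → f (F.image (fun x => x * g)) = f F)
    (hsub : ∀ E F : Finset Γ, E.Nonempty → F.Nonempty → f (E ∪ F) ≤ f E + f F)
    {E : ℕ → Finset Γ} {K : ℕ} {b ε : ℝ} (hb : 0 ≤ b) (hε0 : 0 < ε) (hε1 : ε < 1)
    (hK : (1 - ε) ^ K ≤ ε) (hE : ∀ i < K, (E i).Nonempty ∧ f (E i) ≤ b * #(E i))
    (hinvar : ∀ s i, s < i → i < K → #(((E s)⁻¹ * E i) \ E i) ≤ ε * #(E i))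
    {F₀ : Finset Γ} (hF₀ : F₀.Nonempty)
    (hbdry : ∀ s < K, #(F₀ \ tileCenters (E s) F₀) ≤ ε * #F₀) :
    f F₀ ≤ (b / (1 - ε) + (2 * ε + ε / (1 - ε)) * f {1}) * #F₀ := by
  obtain ⟨𝒯, h𝒯, h𝒯F₀, hrem⟩ := exists_quasiTiling E hε0 hε1 hε0.le (fun i hi => (hE i hi).1)
    hinvar hbdry K le_rfl ∅ (by simp [IsEpsDisjoint]) (by simp)
  rw [biUnion_empty, sdiff_empty] at hrem
  have htiles : ∀ T ∈ 𝒯, T.Nonempty ∧ f T ≤ b * #T := by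
    intro T hT
    obtain ⟨-, i, hi, c, rfl⟩ := h𝒯F₀ T hT
    obtain ⟨hne, hfE⟩ := hE i hi
    refine ⟨hne.smul_finset, ?_⟩
    rw [card_smul_finset]
    exact (hinv _ c hne).trans_le hfE
  have hsum : ∑ T ∈ 𝒯, f T ≤ b * (#F₀ / (1 - ε)) := by
    refine (sum_le_sum fun T hT => (htiles T hT).2).trans ?_
    rw [← mul_sum]
    exact mul_le_mul_of_nonneg_left (h𝒯.sum_card_le hε1 fun T hT => (h𝒯F₀ T hT).1) hb
  have hremε : (#(F₀ \ 𝒯.biUnion id) : ℝ) ≤ (2 * ε + ε / (1 - ε)) * #F₀ := by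
    have hB : 0 ≤ ε * #F₀ + ε * #F₀ / (1 - ε) := by
      have := sub_pos.2 hε1
      positivity
    have hq : 0 ≤ (1 - ε) ^ K := pow_nonneg (sub_nonneg.2 hε1.le) K
    have hqF₀ : (1 - ε) ^ K * #F₀ ≤ ε * #F₀ := mul_le_mul_of_nonneg_right hK (Nat.cast_nonneg _)
    have : ε * #F₀ / (1 - ε) = ε / (1 - ε) * #F₀ := by ring
    nlinarith [mul_nonneg hq hB]
  have hf1 : 0 ≤ f {1} := hnonneg {1} (singleton_nonempty 1)
  calc f F₀ ≤ ∑ T ∈ 𝒯, f T + #(F₀ \ 𝒯.biUnion id) * f {1} :=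
        apply_le_sum_add_card_sdiff_mul hinv hsub hF₀ fun T hT => ⟨(htiles T hT).1, (h𝒯F₀ T hT).1⟩
    _ ≤ b * (#F₀ / (1 - ε)) + (2 * ε + ε / (1 - ε)) * #F₀ * f {1} :=
        add_le_add hsum (mul_le_mul_of_nonneg_right hremε hf1)
    _ = (b / (1 - ε) + (2 * ε + ε / (1 - ε)) * f {1}) * #F₀ := by ring

end OrnsteinWeiss

open OrnsteinWeiss

namespace IsFolner

variable {Γ : Type*} [Group Γ] [DecidableEq Γ] {f : Finset Γ → ℝ} {G H : ℕ → Finset Γ}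

theorem eventually_sum_card_smul_sdiff_le (hH : IsFolner H) (S : Finset Γ) {δ : ℝ} (hδ : 0 < δ) :
    ∀ᶠ n in atTop, ∑ g ∈ S, (#(g • H n \ H n) : ℝ) ≤ δ * #(H n) := by
  have hlim := tendsto_finsetSum S fun g _ => hH.2 g
  rw [sum_const_zero] at hlim
  filter_upwards [hlim.eventually (gt_mem_nhds hδ)] with n hn
  rw [← sum_div, div_lt_iff₀ (by exact_mod_cast (hH.1 n).card_pos)] at hn
  refine le_trans (sum_le_sum fun g _ => ?_) hn.le
  refine Nat.cast_le.2 (card_le_card ?_)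
  rw [symmDiff_def]
  exact le_sup_right

theorem isBoundedUnder_density (hnonneg : ∀ F : Finset Γ, F.Nonempty → 0 ≤ f F)
    (hinv : ∀ (F : Finset Γ) (g : Γ), F.Nonempty → f (F.image (fun x => x * g)) = f F)
    (hsub : ∀ E F : Finset Γ, E.Nonempty → F.Nonempty → f (E ∪ F) ≤ f E + f F)
    (hH : IsFolner H) :
    IsBoundedUnder (· ≤ ·) atTop (fun n => f (H n) / #(H n)) ∧
      IsBoundedUnder (· ≥ ·) atTop (fun n => f (H n) / #(H n)) :=
  ⟨isBoundedUnder_of ⟨f {1}, fun n => (div_card_mem_Icc hnonneg hinv hsub (hH.1 n)).2⟩,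
    isBoundedUnder_of ⟨0, fun n => (div_card_mem_Icc hnonneg hinv hsub (hH.1 n)).1⟩⟩

theorem exists_invariant_shapes (hH : IsFolner H) {p : Finset Γ → Prop}
    (hp : ∃ᶠ n in atTop, p (H n)) {η : ℝ} (hη : 0 < η) (K : ℕ) :
    ∃ m : ℕ → ℕ, (∀ i, p (H (m i))) ∧
      ∀ s i, s < i → i < K → #(((H (m s))⁻¹ * H (m i)) \ H (m i)) ≤ η * #(H (m i)) := by
  induction K with
  | zero =>
    obtain ⟨n, hn⟩ := hp.exists
    exact ⟨fun _ => n, fun _ => hn, fun _ i _ hi => absurd hi (Nat.not_lt_zero i)⟩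
  | succ K ih =>
    obtain ⟨m, hmp, hminv⟩ := ih
    have hev : ∀ᶠ n in atTop, ∀ s ∈ range K,
        #(((H (m s))⁻¹ * H n) \ H n) ≤ η * #(H n) := by
      rw [eventually_all_finset]
      intro s _
      filter_upwards [hH.eventually_sum_card_smul_sdiff_le (H (m s))⁻¹ hη] with n hn
      exact le_trans (by exact_mod_cast card_mul_sdiff_le _ _) hn
    obtain ⟨n, hpn, hn⟩ := (hp.and_eventually hev).exists
    refine ⟨fun i => if i < K then m i else n, fun i => ?_, fun s i hsi hi => ?_⟩
    · dsimp only
      split_ifs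
      exacts [hmp i, hpn]
    · have hs : s < K := by omega
      dsimp only
      rw [if_pos hs]
      split_ifs with hiK
      · exact hminv s i hsi hiK
      · exact hn s (mem_range.2 hs)

theorem eventually_density_le (hnonneg : ∀ F : Finset Γ, F.Nonempty → 0 ≤ f F)
    (hinv : ∀ (F : Finset Γ) (g : Γ), F.Nonempty → f (F.image (fun x => x * g)) = f F)
    (hsub : ∀ E F : Finset Γ, E.Nonempty → F.Nonempty → f (E ∪ F) ≤ f E + f F)
    (hG : IsFolner G) (hH : IsFolner H) {b ε : ℝ} (hb0 : 0 ≤ b)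
    (hb : ∃ᶠ n in atTop, f (H n) / #(H n) < b) (hε0 : 0 < ε) (hε1 : ε < 1) :
    ∀ᶠ n in atTop, f (G n) / #(G n) ≤ b / (1 - ε) + (2 * ε + ε / (1 - ε)) * f {1} := by
  obtain ⟨K, hK⟩ := exists_pow_lt_of_lt_one hε0 (sub_lt_self 1 hε0)
  have hp : ∃ᶠ n in atTop, (H n).Nonempty ∧ f (H n) ≤ b * #(H n) := hb.mono fun n hn =>
    ⟨hH.1 n, ((div_lt_iff₀ (by exact_mod_cast (hH.1 n).card_pos)).1 hn).le⟩
  obtain ⟨m, hm, hinvar⟩ :=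
    hH.exists_invariant_shapes (p := fun T => T.Nonempty ∧ f T ≤ b * #T) hp hε0 K
  have hbdry : ∀ᶠ n in atTop, ∀ s ∈ range K,
      #(G n \ tileCenters (H (m s)) (G n)) ≤ ε * #(G n) := by
    rw [eventually_all_finset]
    intro s _
    filter_upwards [hG.eventually_sum_card_smul_sdiff_le (H (m s)) hε0] with n hn
    exact le_trans (by exact_mod_cast card_sdiff_tileCenters_le _ _) hn
  filter_upwards [hbdry] with n hn
  rw [div_le_iff₀ (by exact_mod_cast (hG.1 n).card_pos)]
  exact apply_le_of_shapes hnonneg hinv hsub hb0 hε0 hε1 hK.le (fun i _ => hm i) hinvar (hG.1 n)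
    fun s hs => hn s (mem_range.2 hs)

theorem limsup_density_le_liminf (hnonneg : ∀ F : Finset Γ, F.Nonempty → 0 ≤ f F)
    (hinv : ∀ (F : Finset Γ) (g : Γ), F.Nonempty → f (F.image (fun x => x * g)) = f F)
    (hsub : ∀ E F : Finset Γ, E.Nonempty → F.Nonempty → f (E ∪ F) ≤ f E + f F)
    (hG : IsFolner G) (hH : IsFolner H) :
    limsup (fun n => f (G n) / #(G n)) atTop ≤ liminf (fun n => f (H n) / #(H n)) atTop := by
  set ℓ := liminf (fun n => f (H n) / #(H n)) atTop
  have hHbdd := hH.isBoundedUnder_density hnonneg hinv hsub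
  have hℓ : 0 ≤ ℓ := le_liminf_of_le hHbdd.1.isCoboundedUnder_flip
    (Eventually.of_forall fun n => (div_card_mem_Icc hnonneg hinv hsub (hH.1 n)).1)
  have hbound : ∀ ε ∈ Set.Ioo (0 : ℝ) 1, limsup (fun n => f (G n) / #(G n)) atTop ≤
      (ℓ + ε) / (1 - ε) + (2 * ε + ε / (1 - ε)) * f {1} := by
    rintro ε ⟨hε0, hε1⟩
    refine limsup_le_of_le (hG.isBoundedUnder_density hnonneg hinv hsub).2.isCoboundedUnder_flip
      (hG.eventually_density_le hnonneg hinv hsub hH (by positivity) ?_ hε0 hε1)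
    exact frequently_lt_of_liminf_lt hHbdd.1.isCoboundedUnder_flip (lt_add_of_pos_right ℓ hε0)
  have hlim : Tendsto (fun ε => (ℓ + ε) / (1 - ε) + (2 * ε + ε / (1 - ε)) * f {1})
      (𝓝[>] 0) (𝓝 ℓ) := by
    have : ContinuousAt (fun ε => (ℓ + ε) / (1 - ε) + (2 * ε + ε / (1 - ε)) * f {1}) 0 := by
      fun_prop (disch := norm_num)
    simpa using this.tendsto.mono_left nhdsWithin_le_nhds
  exact ge_of_tendsto hlim (mem_of_superset (Ioo_mem_nhdsGT one_pos) hbound)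

end IsFolner

theorem stmt12_general {Γ : Type*} [Group Γ] [DecidableEq Γ]
    (f : Finset Γ → ℝ)
    (hnonneg : ∀ F : Finset Γ, F.Nonempty → 0 ≤ f F)
    (hinv : ∀ (F : Finset Γ) (g : Γ), F.Nonempty → f (F.image (fun x => x * g)) = f F)
    (hsub : ∀ E F : Finset Γ, E.Nonempty → F.Nonempty → f (E ∪ F) ≤ f E + f F)
    (hamenable : ∃ F : ℕ → Finset Γ, IsFolner F) :
    ∃ L : ℝ, ∀ F : ℕ → Finset Γ, IsFolner F →
      Tendsto (fun n => f (F n) / (F n).card) atTop (nhds L) := by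
  obtain ⟨H, hH⟩ := hamenable
  refine ⟨liminf (fun n => f (H n) / #(H n)) atTop, fun G hG => ?_⟩
  have hGbdd := hG.isBoundedUnder_density hnonneg hinv hsub
  have hHbdd := hH.isBoundedUnder_density hnonneg hinv hsub
  have hHG := hH.limsup_density_le_liminf hnonneg hinv hsub hG
  exact tendsto_of_le_liminf_of_limsup_le ((liminf_le_limsup hHbdd.1 hHbdd.2).trans hHG)
    (hG.limsup_density_le_liminf hnonneg hinv hsub hH) hGbdd.1 hGbdd.2

/-- Ornstein–Weiss lemma: for a right-invariant subadditive nonnegative function `f` on the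
finite nonempty subsets of a countably infinite amenable group, `f(F n)/|F n|` converges
along every Følner sequence, to a common limit independent of the Følner sequence. -/
theorem stmt12 {Γ : Type*} [Group Γ] [Countable Γ] [Infinite Γ] [DecidableEq Γ]
    (f : Finset Γ → ℝ)
    (hnonneg : ∀ F : Finset Γ, F.Nonempty → 0 ≤ f F)
    (hinv : ∀ (F : Finset Γ) (g : Γ), F.Nonempty → f (F.image (fun x => x * g)) = f F)
    (hsub : ∀ E F : Finset Γ, E.Nonempty → F.Nonempty → f (E ∪ F) ≤ f E + f F)
    (hamenable : ∃ F : ℕ → Finset Γ, IsFolner F) :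
    ∃ L : ℝ, ∀ F : ℕ → Finset Γ, IsFolner F →
      Tendsto (fun n => f (F n) / (F n).card) atTop (nhds L) :=
  stmt12_general f hnonneg hinv hsub hamenable
end

section
/- Every Følner sequence of a countably infinite discrete amenable group Γ admits a tempered subsequence. -/
open Filter
open scoped Pointwise

/-- A sequence of finite subsets is tempered if for some constant `M > 0`,
`|⋃_{k ≤ n} F k⁻¹ · F (n+1)| ≤ M |F (n+1)|` for all `n`. -/
def IsTempered {Γ : Type*} [Group Γ] [DecidableEq Γ] (F : ℕ → Finset Γ) : Prop :=
  ∃ M : ℝ, 0 < M ∧ ∀ n : ℕ,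
    ((((Finset.range (n + 1)).biUnion fun k => (F k)⁻¹ * F (n + 1)).card : ℝ)) ≤
      M * (F (n + 1)).card

lemma finset_biUnion_mul {Γ ι : Type*} [Group Γ] [DecidableEq Γ] [DecidableEq ι]
    (s : Finset ι) (f : ι → Finset Γ) (t : Finset Γ) :
    (s.biUnion f) * t = s.biUnion (fun i => f i * t) := by
  ext x
  simp only [Finset.mem_biUnion, Finset.mem_mul]
  constructor
  · rintro ⟨y, ⟨i, hi, hy⟩, z, hz, rfl⟩
    exact ⟨i, hi, y, hy, z, hz, rfl⟩
  · rintro ⟨i, hi, y, hy, z, hz, rfl⟩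
    exact ⟨y, ⟨i, hi, hy⟩, z, hz, rfl⟩

/-- Key lemma: for any finite `K`, there are arbitrarily large Følner indices `m` with
`|K · F m| ≤ 2 |F m|`. -/
lemma folner_key {Γ : Type*} [Group Γ] [DecidableEq Γ] (F : ℕ → Finset Γ)
    (hF : IsFolner F) (K : Finset Γ) (N : ℕ) :
    ∃ m, N ≤ m ∧ ((K * F m).card : ℝ) ≤ 2 * (F m).card := by
  rcases K.eq_empty_or_nonempty with rfl | hK
  · refine ⟨N, le_rfl, ?_⟩
    simp only [Finset.empty_mul, Finset.card_empty, Nat.cast_zero]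
    positivity
  · set ε : ℝ := (K.card : ℝ)⁻¹ with hε
    have hεpos : 0 < ε := by
      have : 0 < (K.card : ℝ) := by exact_mod_cast Finset.card_pos.mpr hK
      positivity
    have hev : ∀ᶠ m in atTop, ∀ g ∈ K,
        ((symmDiff (F m) ((F m).image (fun x => g * x))).card : ℝ) / (F m).card < ε := by
      rw [eventually_all_finset]
      intro g _
      exact (hF.2 g).eventually (gt_mem_nhds hεpos)
    rcases (hev.and (eventually_ge_atTop N)).exists with ⟨m, hm, hmN⟩
    refine ⟨m, hmN, ?_⟩
    have hFpos : 0 < ((F m).card : ℝ) := by exact_mod_cast Finset.card_pos.mpr (hF.1 m)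
    -- subset bound
    have hsub : K * F m ⊆ F m ∪ K.biUnion (fun g => ((F m).image (fun x => g * x)) \ F m) := by
      intro x hx
      rw [Finset.mem_mul] at hx
      obtain ⟨g, hg, y, hy, rfl⟩ := hx
      by_cases h : g * y ∈ F m
      · exact Finset.mem_union_left _ h
      · refine Finset.mem_union_right _ (Finset.mem_biUnion.mpr ⟨g, hg, ?_⟩)
        exact Finset.mem_sdiff.mpr ⟨Finset.mem_image.mpr ⟨y, hy, rfl⟩, h⟩
    have hcard : (K * F m).card ≤
        (F m).card + ∑ g ∈ K, (((F m).image (fun x => g * x)) \ F m).card :=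
      (Finset.card_le_card hsub).trans
        ((Finset.card_union_le _ _).trans (by gcongr; exact Finset.card_biUnion_le))
    have hterm : ∀ g ∈ K,
        ((((F m).image (fun x => g * x)) \ F m).card : ℝ) ≤ ε * (F m).card := by
      intro g hg
      have h1 : (((F m).image (fun x => g * x)) \ F m).card ≤
          (symmDiff (F m) ((F m).image (fun x => g * x))).card := by
        apply Finset.card_le_card
        intro x hx
        rw [Finset.mem_sdiff] at hx
        rw [Finset.mem_symmDiff]
        exact Or.inr ⟨hx.1, hx.2⟩
      have h2 := hm g hg
      rw [div_lt_iff₀ hFpos] at h2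
      calc ((((F m).image (fun x => g * x)) \ F m).card : ℝ)
          ≤ ((symmDiff (F m) ((F m).image (fun x => g * x))).card : ℝ) := by exact_mod_cast h1
        _ ≤ ε * (F m).card := h2.le
    calc ((K * F m).card : ℝ)
        ≤ (F m).card + ∑ g ∈ K, ((((F m).image (fun x => g * x)) \ F m).card : ℝ) := by
          exact_mod_cast hcard
      _ ≤ (F m).card + ∑ _g ∈ K, ε * (F m).card := by gcongr with g hg; exact hterm g hg
      _ = (F m).card + K.card * (ε * (F m).card) := by rw [Finset.sum_const, nsmul_eq_mul]
      _ = 2 * (F m).card := by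
          have : (K.card : ℝ) * ε = 1 := by
            rw [hε, mul_inv_cancel₀]
            exact_mod_cast (Finset.card_pos.mpr hK).ne'
          rw [← mul_assoc, this]; ring

/-- Recursive construction: accumulated union of inverses, together with the chosen index. -/
noncomputable def folnerRec {Γ : Type*} [Group Γ] [DecidableEq Γ] (F : ℕ → Finset Γ)
    (hF : IsFolner F) : ℕ → Finset Γ × ℕ
  | 0 => ((F 0)⁻¹, 0)
  | n + 1 =>
    let p := folnerRec F hF n
    let m := (folner_key F hF p.1 (p.2 + 1)).choose
    (p.1 ∪ (F m)⁻¹, m)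

/-- Every Følner sequence of a countably infinite discrete amenable group admits a tempered
subsequence. -/
theorem stmt13 {Γ : Type*} [Group Γ] [Countable Γ] [Infinite Γ] [DecidableEq Γ]
    (F : ℕ → Finset Γ) (hF : IsFolner F) :
    ∃ φ : ℕ → ℕ, StrictMono φ ∧ IsTempered (F ∘ φ) := by
  set φ : ℕ → ℕ := fun n => (folnerRec F hF n).2 with hφ
  have hspec : ∀ n, φ n + 1 ≤ φ (n + 1) ∧
      (((folnerRec F hF n).1 * F (φ (n + 1))).card : ℝ) ≤ 2 * (F (φ (n + 1))).card := by
    intro n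
    have := (folner_key F hF (folnerRec F hF n).1 ((folnerRec F hF n).2 + 1)).choose_spec
    exact this
  have hmono : StrictMono φ := strictMono_nat_of_lt_succ fun n => (hspec n).1
  have hfst : ∀ n, (folnerRec F hF n).1 =
      (Finset.range (n + 1)).biUnion fun k => (F (φ k))⁻¹ := by
    intro n
    induction n with
    | zero => simp [folnerRec, hφ]
    | succ n ih =>
      show (folnerRec F hF n).1 ∪ (F (φ (n+1)))⁻¹ = _
      rw [Finset.range_add_one, Finset.biUnion_insert, ← ih, Finset.union_comm]
  refine ⟨φ, hmono, 2, two_pos, fun n => ?_⟩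
  have key := (hspec n).2
  rw [hfst n, finset_biUnion_mul] at key
  simpa using key
end
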